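/- arXiv:0901.4076 — 2 statements merged into one kernel-verified Lean document; each statement's English description precedes it below -/
import Mathlib

section
/- Let k be a field of characteristic zero and V a finite-dimensional k-vector space. Suppose h, e, f ∈ End(V) satisfy the sl₂-relations h∘e − e∘h = 2e, h∘f − f∘h = −2f, and e∘f − f∘e = h. Then V decomposes as the direct sum V = ker(e) ⊕ range(f). -/
open LinearMap Module

section Sl2Aux

variable {k V : Type*} [Field k] [CharZero k]
  [AddCommGroup V] [Module k V] [FiniteDimensional k V]
  {h e f : Module.End k V}

/-- An "ad h"-eigenvector in `End V` with nonzero eigenvalue is nilpotent. -/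
lemma sl2aux_nilpotent {g : Module.End k V} (c : k) (hc : c ≠ 0)
    (hcomm : h * g = g * h + c • g) : ∃ N, g ^ N = 0 := by
  by_contra hg
  push_neg at hg
  have key : ∀ m : ℕ, h * g ^ m = g ^ m * h + ((m : k) * c) • g ^ m := by
    intro m
    induction m with
    | zero => simp
    | succ m ih =>
      rw [pow_succ, ← mul_assoc, ih, add_mul, smul_mul_assoc, mul_assoc, hcomm]
      rw [mul_add, mul_smul_comm, ← pow_succ]
      rw [← mul_assoc, ← pow_succ]
      push_cast
      rw [add_mul, one_mul, add_smul]
      abel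
  set T : Module.End k (Module.End k V) :=
    LinearMap.mulLeft k h - LinearMap.mulRight k h with hT
  have hev : ∀ m : ℕ, T.HasEigenvector ((m : k) * c) (g ^ m) := by
    intro m
    refine ⟨Module.End.mem_eigenspace_iff.mpr ?_, hg m⟩
    simp only [hT, LinearMap.sub_apply, LinearMap.mulLeft_apply, LinearMap.mulRight_apply]
    rw [key m]; abel
  have hinj : Function.Injective (fun m : ℕ => (m : k) * c) := by
    intro a b hab
    simp only [mul_eq_mul_right_iff, hc, or_false] at hab
    exact_mod_cast hab
  have hli := T.eigenvectors_linearIndependent' (ι := Fin (finrank k (Module.End k V) + 1))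
    (fun i => ((i : ℕ) : k) * c) (fun a b hab => Fin.val_injective (by exact_mod_cast hinj hab))
    (fun i => g ^ (i : ℕ)) (fun i => hev i)
  have := hli.fintype_card_le_finrank
  simp [Fintype.card_fin] at this

end Sl2Aux

/-- The product `h (h-1) ⋯ (h-(m-1))`. -/
noncomputable def sl2aux_Q {k V : Type*} [Field k] [AddCommGroup V] [Module k V]
    (h : Module.End k V) : ℕ → Module.End k V
  | 0 => 1
  | (m + 1) => sl2aux_Q h m * (h - ((m : k)) • 1)

section Sl2Aux2

variable {k V : Type*} [Field k] [CharZero k]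
  [AddCommGroup V] [Module k V] [FiniteDimensional k V]
  {h e f : Module.End k V}

lemma sl2aux_ef_pow (hf : h * f = f * h - (2:k) • f) (ef : e * f = f * e + h) :
    ∀ m : ℕ, e * f ^ (m + 1)
      = f ^ (m + 1) * e + (((m + 1 : ℕ)) : k) • (f ^ m * (h - ((m : k)) • 1)) := by
  intro m
  induction m with
  | zero => simp [ef]
  | succ m ih =>
    have key : (h - ((m : k)) • 1) * f = f * (h - (((m : ℕ) + 2 : k)) • 1) := by
      rw [sub_mul, mul_sub, hf, smul_mul_assoc, one_mul, mul_smul_comm, mul_one]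
      module
    have expand : e * f ^ (m + 1 + 1) = (e * f ^ (m + 1)) * f := by
      rw [pow_succ, ← mul_assoc]
    rw [expand, ih, add_mul, smul_mul_assoc, mul_assoc (f ^ (m + 1)) e f, ef,
      mul_assoc (f ^ m) _ f, key, ← mul_assoc (f ^ m) f, ← pow_succ,
      mul_add, ← mul_assoc, ← pow_succ]
    simp only [mul_sub, mul_smul_comm, mul_one]
    push_cast
    module

lemma sl2aux_powpow (he : h * e = e * h + (2:k) • e) (hf : h * f = f * h - (2:k) • f)
    (ef : e * f = f * e + h) :
    ∀ (m : ℕ) (v : V), e v = 0 →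
      (e ^ m * f ^ m) v = ((Nat.factorial m : ℕ) : k) • (sl2aux_Q h m) v := by
  intro m
  induction m with
  | zero => intro v hv; simp [sl2aux_Q]
  | succ m ih =>
    intro v hv
    have hcomp : e ^ (m + 1) * f ^ (m + 1) = e ^ m * (e * f ^ (m + 1)) := by
      rw [← mul_assoc, ← pow_succ]
    have hv' : e ((h - ((m : k)) • 1) v) = 0 := by
      have heh : e (h v) = h (e v) - (2:k) • e v := by
        have h1 : e * h = h * e - (2:k) • e := by rw [he]; abel
        have h2 := congrArg (fun g : Module.End k V => g v) h1
        simpa using h2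
      simp [heh, hv]
    rw [hcomp, Module.End.mul_apply, sl2aux_ef_pow hf ef m]
    simp only [LinearMap.add_apply, Module.End.mul_apply, LinearMap.smul_apply, hv, map_zero,
      zero_add, map_smul]
    rw [← Module.End.mul_apply (e ^ m) (f ^ m), ih _ hv', smul_smul,
      show sl2aux_Q h (m + 1) = sl2aux_Q h m * (h - ((m : k)) • 1) from rfl,
      Module.End.mul_apply, Nat.factorial_succ]
    congr 1
    push_cast
    ring

lemma sl2aux_Q_ker (he : h * e = e * h + (2:k) • e) (hf : h * f = f * h - (2:k) • f)
    (ef : e * f = f * e + h) {N : ℕ} (hN : f ^ N = 0) (v : V) (hv : e v = 0) :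
    (sl2aux_Q h N) v = 0 := by
  have key := sl2aux_powpow he hf ef N v hv
  rw [hN, mul_zero] at key
  simp only [LinearMap.zero_apply] at key
  have hfac : ((Nat.factorial N : ℕ) : k) ≠ 0 := Nat.cast_ne_zero.mpr (Nat.factorial_ne_zero N)
  exact (smul_eq_zero.mp key.symm).resolve_left hfac


lemma sl2aux_eigen_zero (he : h * e = e * h + (2:k) • e) (hf : h * f = f * h - (2:k) • f)
    (ef : e * f = f * e + h) (n : ℕ) (v : V) (hv : e v = 0)
    (hvr : v ∈ LinearMap.range f) (heig : h v = ((n : k)) • v) : v = 0 := by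
  classical
  by_contra hv0
  obtain ⟨u, hu⟩ := hvr
  set g : Module.End k V := h - (((n : k)) + 2) • 1 with hg_def
  set g' : Module.End k V := h - ((n : k)) • 1 with hg'_def
  -- semiconjugation facts
  have sc_f : SemiconjBy f g g' := by
    show f * g = g' * f
    rw [hg_def, hg'_def, mul_sub, sub_mul, hf, smul_mul_assoc, one_mul, mul_smul_comm, mul_one]
    module
  have sc_e : ∀ c : k, SemiconjBy e (h - c • 1) (h - (c + 2) • 1) := by
    intro c
    show e * (h - c • 1) = (h - (c + 2) • 1) * e
    have he' : e * h = h * e - (2:k) • e := by rw [he]; abel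
    rw [mul_sub, sub_mul, he', mul_smul_comm, mul_one, smul_mul_assoc, one_mul]
    module
  -- Fitting decomposition
  obtain ⟨d, ⟨hcg, hcg'⟩, hd1⟩ :=
    (((g.eventually_isCompl_ker_pow_range_pow).and
      (g'.eventually_isCompl_ker_pow_range_pow)).and (Filter.eventually_ge_atTop 1)).exists
  have husup : u ∈ LinearMap.ker (g ^ d) ⊔ LinearMap.range (g ^ d) := by
    rw [hcg.sup_eq_top]; trivial
  obtain ⟨u₁, hu₁, u₂, hu₂, huu⟩ := Submodule.mem_sup.mp husup
  have sc_fd : f * g ^ d = g' ^ d * f := (sc_f.pow_right d).eq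
  have hfu2 : f u₂ ∈ LinearMap.range (g' ^ d) := by
    obtain ⟨x, hx⟩ := hu₂
    exact ⟨f x, by rw [← Module.End.mul_apply, ← sc_fd, Module.End.mul_apply, hx]⟩
  have hfu1 : (g' ^ d) (f u₁) = 0 := by
    rw [← Module.End.mul_apply, ← sc_fd, Module.End.mul_apply,
      LinearMap.mem_ker.mp hu₁, map_zero]
  have hvker : (g' ^ d) v = 0 := by
    have hg'v : g' v = 0 := by simp [hg'_def, heig]
    obtain ⟨d', rfl⟩ := Nat.exists_eq_add_of_le hd1
    rw [add_comm, pow_succ, Module.End.mul_apply, hg'v, map_zero]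
  have hfu2' : f u₂ = 0 := by
    have hmem : f u₂ ∈ LinearMap.ker (g' ^ d) := by
      have : f u₂ = v - f u₁ := by
        rw [← hu, ← huu, map_add]; abel
      rw [LinearMap.mem_ker, this, map_sub, hvker, hfu1, sub_zero]
    exact (Submodule.disjoint_def.mp hcg'.disjoint) (f u₂) hmem hfu2
  have hvu1 : f u₁ = v := by
    rw [← hu, ← huu, map_add, hfu2', add_zero]
  have hu₁0 : u₁ ≠ 0 := by
    rintro rfl; rw [map_zero] at hvu1; exact hv0 hvu1.symm
  -- the sequence w m = e^m u₁
  set w : ℕ → V := fun m => (e ^ m) u₁ with hw_def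
  have hew : ∀ m, e (w m) = w (m + 1) := by
    intro m
    show e ((e ^ m) u₁) = (e ^ (m + 1)) u₁
    rw [pow_succ', Module.End.mul_apply]
  have heh_pt : ∀ x : V, e (h x) = h (e x) - (2:k) • e x := by
    intro x
    have h1 : e * h = h * e - (2:k) • e := by rw [he]; abel
    have h2 := congrArg (fun g : Module.End k V => g x) h1
    simpa using h2
  have hef_pt : ∀ x : V, f (e x) = e (f x) - h x := by
    intro x
    have h1 : f * e = e * f - h := by rw [ef]; abel
    have h2 := congrArg (fun g : Module.End k V => g x) h1
    simpa using h2
  -- recursion for f (w (m+1))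
  have hrec : ∀ m : ℕ, f (w (m + 1)) =
      (-(((m + 1 : ℕ)) : k)) • (h (w m) - ((m : k)) • w m) := by
    intro m
    induction m with
    | zero =>
      have : f (w 1) = e (f (w 0)) - h (w 0) := by
        rw [← hew 0]; exact hef_pt (w 0)
      rw [this]
      have hw0 : w 0 = u₁ := by simp [hw_def]
      rw [hw0, hvu1, hv]
      push_cast
      module
    | succ m ih =>
      have step1 : f (w (m + 2)) = e (f (w (m + 1))) - h (w (m + 1)) := by
        rw [← hew (m + 1)]; exact hef_pt (w (m + 1))
      rw [step1, ih, map_smul, map_sub, map_smul, heh_pt, hew]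
      push_cast
      module
  -- generalized eigenspace membership
  have hgen : ∀ m : ℕ, ((h - (((n : k)) + 2 + 2 * m) • 1) ^ d) (w m) = 0 := by
    intro m
    induction m with
    | zero =>
      have : (((n : k)) + 2 + 2 * ((0 : ℕ) : k)) = ((n : k)) + 2 := by push_cast; ring
      rw [this]
      exact LinearMap.mem_ker.mp hu₁
    | succ m ih =>
      have hc : (((n : k)) + 2 + 2 * (((m + 1 : ℕ)) : k))
          = (((n : k)) + 2 + 2 * (m : k)) + 2 := by push_cast; ring
      rw [hc, ← hew m, ← Module.End.mul_apply,
        ← ((sc_e (((n : k)) + 2 + 2 * (m : k))).pow_right d).eq,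
        Module.End.mul_apply, ih, map_zero]
  -- find the largest M with w M ≠ 0
  obtain ⟨Ne, hNe⟩ := sl2aux_nilpotent (g := e) (2 : k) two_ne_zero (by rw [he])
  have hex : ∃ m, w m = 0 := ⟨Ne, by simp [hw_def, hNe]⟩
  have hM₀0 : Nat.find hex ≠ 0 := by
    intro hc
    have hspec := Nat.find_spec hex
    rw [hc] at hspec
    simp only [hw_def, pow_zero, Module.End.one_apply] at hspec
    exact hu₁0 hspec
  set M := Nat.find hex - 1 with hM
  have hwM : w M ≠ 0 := Nat.find_min hex (by omega)
  have hwM1 : w (M + 1) = 0 := by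
    have hspec := Nat.find_spec hex
    rwa [show M + 1 = Nat.find hex by omega]
  -- conclude
  have h0 : (0 : V) = (-(((M + 1 : ℕ)) : k)) • (h (w M) - ((M : k)) • w M) := by
    rw [← hrec M, hwM1, map_zero]
  have heigM : h (w M) = ((M : k)) • w M := by
    have hne : (-(((M + 1 : ℕ)) : k)) ≠ 0 := by
      simp only [ne_eq, neg_eq_zero, Nat.cast_eq_zero]
      exact fun hh => by exact_mod_cast hh
    have := (smul_eq_zero.mp h0.symm).resolve_left hne
    rwa [sub_eq_zero] at this
  set c : k := ((n : k)) + 2 + 2 * (M : k) with hc_def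
  have hpow : ∀ j : ℕ, ((h - c • 1) ^ j) (w M) = (((M : k) - c) ^ j) • w M := by
    intro j
    induction j with
    | zero => simp
    | succ j ih =>
      rw [pow_succ, Module.End.mul_apply]
      have h1 : (h - c • 1) (w M) = ((M : k) - c) • w M := by
        simp [LinearMap.sub_apply, heigM, sub_smul]
      rw [h1, map_smul, ih, smul_smul, ← pow_succ']
  have hfinal := hgen M
  rw [← hc_def, hpow d] at hfinal
  have hcM : (M : k) - c ≠ 0 := by
    have hrw : (M : k) - c = -(((n + M + 2 : ℕ)) : k) := by
      rw [hc_def]; push_cast; ring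
    rw [hrw, ne_eq, neg_eq_zero, Nat.cast_eq_zero]
    omega
  exact hwM ((smul_eq_zero.mp hfinal).resolve_left (pow_ne_zero d hcM))


lemma sl2aux_disjoint (he : h * e = e * h + (2:k) • e) (hf : h * f = f * h - (2:k) • f)
    (ef : e * f = f * e + h) :
    Disjoint (LinearMap.ker e) (LinearMap.range f) := by
  obtain ⟨N, hN⟩ := sl2aux_nilpotent (g := f) (-2 : k) (by norm_num)
    (by rw [hf]; module)
  have claim : ∀ m : ℕ, ∀ v : V, e v = 0 → v ∈ LinearMap.range f →
      (sl2aux_Q h m) v = 0 → v = 0 := by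
    intro m
    induction m with
    | zero => intro v _ _ hQ; simpa [sl2aux_Q] using hQ
    | succ m ih =>
      intro v hv hvr hQ
      have hQ' : (sl2aux_Q h m) ((h - ((m : k)) • 1) v) = 0 := by
        rw [show sl2aux_Q h (m + 1) = sl2aux_Q h m * (h - ((m : k)) • 1) from rfl,
          Module.End.mul_apply] at hQ
        exact hQ
      have hv'ker : e ((h - ((m : k)) • 1) v) = 0 := by
        have h1 : e * h = h * e - (2:k) • e := by rw [he]; abel
        have h2 := congrArg (fun g : Module.End k V => g v) h1
        simp only [Module.End.mul_apply, LinearMap.sub_apply, LinearMap.smul_apply] at h2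
        simp [h2, hv]
      have hv'r : (h - ((m : k)) • 1) v ∈ LinearMap.range f := by
        obtain ⟨x, hx⟩ := hvr
        refine ⟨h x - (2:k) • x - ((m : k)) • x, ?_⟩
        have h1 := congrArg (fun g : Module.End k V => g x) hf
        simp only [Module.End.mul_apply, LinearMap.sub_apply, LinearMap.smul_apply] at h1
        rw [map_sub, map_sub, map_smul, map_smul, ← hx, LinearMap.sub_apply,
          LinearMap.smul_apply, Module.End.one_apply, h1]
      have hv' := ih _ hv'ker hv'r hQ'
      have heig : h v = ((m : k)) • v := by
        have := sub_eq_zero.mpr hv'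
        simpa [sub_eq_zero] using hv'
      exact sl2aux_eigen_zero he hf ef m v hv hvr heig
  rw [Submodule.disjoint_def]
  intro v hv hvr
  exact claim N v (LinearMap.mem_ker.mp hv) hvr
    (sl2aux_Q_ker he hf ef hN v (LinearMap.mem_ker.mp hv))

end Sl2Aux2

/-- For an sl₂-triple of endomorphisms of a finite-dimensional vector space over a
field of characteristic zero, the space decomposes as `ker e ⊕ range f`. -/
theorem sl2_ker_e_compl_range_f
    (k : Type*) [Field k] [CharZero k]
    (V : Type*) [AddCommGroup V] [Module k V] [FiniteDimensional k V]
    (h e f : Module.End k V)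
    (rel_he : h ∘ₗ e - e ∘ₗ h = 2 • e)
    (rel_hf : h ∘ₗ f - f ∘ₗ h = -(2 • f))
    (rel_ef : e ∘ₗ f - f ∘ₗ e = h) :
    IsCompl (LinearMap.ker e) (LinearMap.range f) := by
  have cast_e : ((2:ℕ):k) • e = (2:k) • e := by norm_num
  have cast_f : ((2:ℕ):k) • f = (2:k) • f := by norm_num
  have rel_he' : h * e - e * h = (2:k) • e := by
    rw [← cast_e, Nat.cast_smul_eq_nsmul k 2 e]; exact rel_he
  have rel_hf' : h * f - f * h = -((2:k) • f) := by
    rw [← cast_f, Nat.cast_smul_eq_nsmul k 2 f]; exact rel_hf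
  have he : h * e = e * h + (2:k) • e := sub_eq_iff_eq_add'.mp rel_he'
  have hf : h * f = f * h - (2:k) • f := by
    have h1 := sub_eq_iff_eq_add'.mp rel_hf'
    rw [h1]; abel
  have ef : e * f = f * e + h := sub_eq_iff_eq_add'.mp rel_ef
  have disj1 : Disjoint (LinearMap.ker e) (LinearMap.range f) := sl2aux_disjoint he hf ef
  have disj2 : Disjoint (LinearMap.ker f) (LinearMap.range e) := by
    refine sl2aux_disjoint (h := -h) (e := f) (f := e) ?_ ?_ ?_
    · rw [neg_mul, mul_neg, hf]; abel
    · rw [neg_mul, mul_neg, he]; abel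
    · rw [ef]; abel
  have d1 := LinearMap.finrank_range_add_finrank_ker e
  have d2 := LinearMap.finrank_range_add_finrank_ker f
  have le1 := Submodule.finrank_add_finrank_le_of_disjoint disj1
  have le2 := Submodule.finrank_add_finrank_le_of_disjoint disj2
  refine ⟨disj1, codisjoint_iff.mpr (Submodule.eq_top_of_disjoint _ _ ?_ disj1)⟩
  omega
end

section
/- Let k be a field of characteristic zero and V a finite-dimensional k-vector space. Suppose h, e, f ∈ End(V) satisfy the sl₂-relations h∘e − e∘h = 2e, h∘f − f∘h = −2f, and e∘f − f∘e = h. If P ∈ End(V) satisfies P∘P = P, e∘P = 0, P∘f = 0, and P v = v for every v ∈ ker(e), then P equals the projection of V onto ker(e) along range(f); in particular such an operator P is unique. -/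
/-!
`P` fixes `ker e` and kills `range f`, so these two subspaces meet only in `0`, and on each of
them `P` agrees with the projection. It remains to see that they span `V`, i.e. that
`dim ker f ≤ dim ker e`. In characteristic zero `e` and `f` are nilpotent: `eⁿ` is an
eigenvector of `ad h` with eigenvalue `2n`, and `ad h` has only finitely many eigenvalues.
So the Weyl element `g = exp (-f) * exp e` is defined and invertible, and the sl₂ relations
give `g f g⁻¹ = -e`: the isomorphism `g` maps `ker f` into `ker e`.
-/

open Module LinearMap

namespace IsNilpotent

variable {A : Type*} [Ring A] [Algebra ℚ A]

theorem exp_mul_mul_exp_neg {a : A} (ha : IsNilpotent a) (b : A) :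
    exp a * b * exp (-a) = exp (mulLeft ℚ a - mulRight ℚ a : Module.End ℚ A) b := by
  have hsplit : (mulLeft ℚ a - mulRight ℚ a : Module.End ℚ A) =
      mulLeft ℚ a + mulRight ℚ (-a) := by
    ext; simp [sub_eq_add_neg]
  obtain ⟨n, hn⟩ := ha
  have hn' : (-a) ^ n = 0 := by rw [neg_pow, hn, mul_zero]
  have hL : (mulLeft ℚ a : Module.End ℚ A) ^ n = 0 := by
    rw [pow_mulLeft, hn, mulLeft_zero_eq_zero]
  have hR : (mulRight ℚ (-a) : Module.End ℚ A) ^ n = 0 := by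
    rw [pow_mulRight, hn', mulRight_zero_eq_zero]
  rw [hsplit, exp_add_of_commute (commute_mulLeft_right a (-a)) ⟨n, hL⟩ ⟨n, hR⟩,
    exp_eq_sum hn, exp_eq_sum hn', exp_eq_sum hL, exp_eq_sum hR]
  simp [Finset.sum_mul, Finset.mul_sum, pow_mulLeft, pow_mulRight, mul_assoc]

theorem exp_mul_mul_exp_neg_of_commute {a b c d : A} (ha : IsNilpotent a)
    (hc : a * b - b * a = c) (hd : a * c - c * a = d) (had : Commute a d) :
    exp a * b * exp (-a) = b + c + (2 : ℚ)⁻¹ • d := by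
  set D : Module.End ℚ A := mulLeft ℚ a - mulRight ℚ a
  have hDb : D b = c := hc
  have hDc : D c = d := hd
  have hDd : D d = 0 := sub_eq_zero.mpr had
  have hD : IsNilpotent D := (commute_mulLeft_right a a).isNilpotent_sub
    ((isNilpotent_mulLeft_iff ℚ a).mpr ha) ((isNilpotent_mulRight_iff ℚ a).mpr ha)
  rw [exp_mul_mul_exp_neg ha, ← Module.End.smul_def,
    exp_smul_eq_sum (k := 3) (by simp [pow_three, Module.End.mul_apply, hDb, hDc, hDd]) hD]
  simp [Finset.sum_range_succ, sq, Module.End.mul_apply, hDb, hDc, add_assoc]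

end IsNilpotent

theorem isNilpotent_of_mul_sub_mul_eq_smul {k A : Type*} [Field k] [CharZero k] [Ring A]
    [Algebra k A] [FiniteDimensional k A] {x a : A} {c : k} (hc : c ≠ 0)
    (hxa : x * a - a * x = c • a) : IsNilpotent a := by
  set D : Module.End k A := mulLeft k x - mulRight k x
  have hD (n : ℕ) : D (a ^ n) = (n * c) • a ^ n := by
    induction n with
    | zero => simp [D]
    | succ n ih =>
      calc D (a ^ (n + 1)) = D (a ^ n) * a + a ^ n * (x * a - a * x) := by
            simp only [D, LinearMap.sub_apply, mulLeft_apply, mulRight_apply, pow_succ]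
            noncomm_ring
        _ = ((n + 1 : ℕ) * c) • a ^ (n + 1) := by
            rw [ih, hxa, smul_mul_assoc, mul_smul_comm, ← pow_succ, ← add_smul]
            push_cast
            module
  by_contra hnil
  have hev (n : ℕ) : D.HasEigenvalue (n * c) :=
    Module.End.hasEigenvalue_of_hasEigenvector
      ⟨Module.End.mem_eigenspace_iff.mpr (hD n), fun h0 ↦ hnil ⟨n, h0⟩⟩
  exact Set.infinite_of_injective_forall_mem
    (fun m n hmn ↦ by simpa [hc] using hmn) hev D.finite_hasEigenvalue

open IsNilpotent in
theorem exp_neg_mul_exp_mul_eq_neg_mul {A : Type*} [Ring A] [Algebra ℚ A] {h e f : A}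
    (he : IsNilpotent e) (hf : IsNilpotent f)
    (rel_he : h * e - e * h = 2 • e) (rel_hf : h * f - f * h = -(2 • f))
    (rel_ef : e * f - f * e = h) :
    exp (-f) * exp e * f = -(e * (exp (-f) * exp e)) := by
  have conj_e : exp e * f * exp (-e) = f + h - e := by
    have hd : e * h - h * e = -(2 • e) := by rw [← rel_he, neg_sub]
    rw [exp_mul_mul_exp_neg_of_commute he rel_ef hd ((Commute.refl e).smul_right 2).neg_right]
    module
  have conj_f : exp (-f) * (f + h - e) * exp f = -e := by
    have hc : -f * (f + h - e) - (f + h - e) * -f = -(2 • f) - h := by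
      rw [← rel_hf, ← rel_ef]
      noncomm_ring
    have hd : -f * (-(2 • f) - h) - (-(2 • f) - h) * -f = 2 • f :=
      calc _ = f * h - h * f := by noncomm_ring
        _ = 2 • f := by rw [← neg_sub, rel_hf, neg_neg]
    have := exp_mul_mul_exp_neg_of_commute hf.neg hc hd ((Commute.refl f).smul_right 2).neg_left
    rw [neg_neg] at this
    rw [this]
    module
  calc exp (-f) * exp e * f = exp (-f) * (f + h - e) * exp e := by
        rw [← conj_e]
        simp only [mul_assoc, exp_neg_mul_exp_self he, mul_one]
    _ = -e * exp (-f) * exp e := by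
        rw [← conj_f]
        simp only [mul_assoc, exp_mul_exp_neg_self hf, mul_one]
    _ = -(e * (exp (-f) * exp e)) := by noncomm_ring

theorem finrank_ker_le_finrank_ker_of_sl2 {k V : Type*} [Field k] [CharZero k] [AddCommGroup V]
    [Module k V] [FiniteDimensional k V] {h e f : Module.End k V}
    (rel_he : h * e - e * h = 2 • e) (rel_hf : h * f - f * h = -(2 • f))
    (rel_ef : e * f - f * e = h) :
    finrank k (ker f) ≤ finrank k (ker e) := by
  have he : IsNilpotent e := isNilpotent_of_mul_sub_mul_eq_smul (c := (2 : k)) two_ne_zero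
    (by rw [rel_he]; module)
  have hf : IsNilpotent f := isNilpotent_of_mul_sub_mul_eq_smul (c := (-2 : k)) (by norm_num)
    (by rw [rel_hf]; module)
  let _ : Algebra ℚ (Module.End k V) := Algebra.compHom _ (algebraMap ℚ k)
  set g := IsNilpotent.exp (-f) * IsNilpotent.exp e
  have hg : Function.Injective g := ((Module.End.isUnit_iff g).mp
    ((IsNilpotent.isUnit_exp hf.neg).mul (IsNilpotent.isUnit_exp he))).injective
  have hmaps : ∀ y ∈ ker f, g y ∈ ker e := fun y hy ↦ by
    have := LinearMap.congr_fun (exp_neg_mul_exp_mul_eq_neg_mul he hf rel_he rel_hf rel_ef) y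
    rw [mem_ker] at hy ⊢
    simpa [g, Module.End.mul_apply, hy] using this.symm
  exact finrank_le_finrank_of_injective (f := g.restrict hmaps)
    fun a b hab ↦ Subtype.ext (hg (congrArg Subtype.val hab))

theorem sl2_extremal_projector_unique_general
    (k : Type*) [Field k] [CharZero k]
    (V : Type*) [AddCommGroup V] [Module k V] [FiniteDimensional k V]
    (h e f : Module.End k V)
    (rel_he : h ∘ₗ e - e ∘ₗ h = 2 • e)
    (rel_hf : h ∘ₗ f - f ∘ₗ h = -(2 • f))
    (rel_ef : e ∘ₗ f - f ∘ₗ e = h)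
    (P : Module.End k V)
    (hPf : P ∘ₗ f = 0)
    (hfix : ∀ v ∈ LinearMap.ker e, P v = v) :
    ∃ hc : IsCompl (LinearMap.ker e) (LinearMap.range f),
      P = (LinearMap.ker e).subtype ∘ₗ
        (LinearMap.ker e).linearProjOfIsCompl (LinearMap.range f) hc := by
  have hPf' (w : V) : P (f w) = 0 := LinearMap.congr_fun hPf w
  have hdisj : Disjoint (ker e) (range f) := by
    rw [Submodule.disjoint_def]
    rintro _ hv ⟨w, rfl⟩
    rw [← hfix _ hv, hPf']
  have hdim : finrank k V ≤ finrank k (ker e) + finrank k (range f) := by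
    have := finrank_ker_le_finrank_ker_of_sl2 rel_he rel_hf rel_ef
    have := finrank_range_add_finrank_ker f
    omega
  have hc : IsCompl (ker e) (range f) := (Submodule.isCompl_iff_disjoint _ _ hdim).mpr hdisj
  refine ⟨hc, ext_on_codisjoint hc.codisjoint (fun v hv ↦ ?_) ?_⟩
  · exact (hfix v hv).trans (Submodule.projection_apply_of_mem_left hc hv).symm
  · rintro _ ⟨w, rfl⟩
    exact (hPf' w).trans (Submodule.projection_apply_of_mem_right hc ⟨w, rfl⟩).symm

/-- For an sl₂-triple `(h, e, f)` on a finite-dimensional vector space over a field of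
characteristic zero, any operator `P` with `P² = P`, `e ∘ P = 0`, `P ∘ f = 0` which fixes
`ker e` pointwise is the projection onto `ker e` along `range f`; in particular it is
unique. -/
theorem sl2_extremal_projector_unique
    (k : Type*) [Field k] [CharZero k]
    (V : Type*) [AddCommGroup V] [Module k V] [FiniteDimensional k V]
    (h e f : Module.End k V)
    (rel_he : h ∘ₗ e - e ∘ₗ h = 2 • e)
    (rel_hf : h ∘ₗ f - f ∘ₗ h = -(2 • f))
    (rel_ef : e ∘ₗ f - f ∘ₗ e = h)
    (P : Module.End k V)
    (hPP : P ∘ₗ P = P)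
    (heP : e ∘ₗ P = 0)
    (hPf : P ∘ₗ f = 0)
    (hfix : ∀ v ∈ LinearMap.ker e, P v = v) :
    ∃ hc : IsCompl (LinearMap.ker e) (LinearMap.range f),
      P = (LinearMap.ker e).subtype ∘ₗ
        (LinearMap.ker e).linearProjOfIsCompl (LinearMap.range f) hc :=
  sl2_extremal_projector_unique_general k V h e f rel_he rel_hf rel_ef P hPf hfix
end
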